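/- A topological space X is e*-θ-T_{1/2} (every quasi e*-θ-closed set is e*-θ-closed) if and only if X is e*θ-T_1 (for any distinct points x, y there exist e*-θ-open sets U ∋ x with y ∉ U and V ∋ y with x ∉ V). -/

import Mathlib

open Set Topology

variable {X : Type*} [TopologicalSpace X]

/-- δ-closure of A. -/
def deltaCl (A : Set X) : Set X :=
  {x | ∀ U : Set X, IsOpen U → x ∈ U → (interior (closure U) ∩ A).Nonempty}

/-- A is e*-open if A ⊆ cl(int(δ-cl A)). -/
def EStarOpen (A : Set X) : Prop := A ⊆ closure (interior (deltaCl A))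

/-- A is e*-closed if its complement is e*-open. -/
def EStarClosed (A : Set X) : Prop := EStarOpen Aᶜ

/-- e*-closure: intersection of all e*-closed supersets. -/
def eStarCl (A : Set X) : Set X := ⋂₀ {F | EStarClosed F ∧ A ⊆ F}

/-- e*-interior: union of all e*-open subsets. -/
def eStarInt (A : Set X) : Set X := ⋃₀ {U | EStarOpen U ∧ U ⊆ A}

/-- e*-regular: both e*-open and e*-closed. -/
def EStarRegular (A : Set X) : Prop := EStarOpen A ∧ EStarClosed A

/-- e*-θ-closure. -/
def eStarClTheta (A : Set X) : Set X :=
  {x | ∀ U : Set X, EStarOpen U → x ∈ U → (eStarCl U ∩ A).Nonempty}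

/-- e*-θ-closed. -/
def EStarThetaClosed (A : Set X) : Prop := A = eStarClTheta A

/-- e*-θ-open. -/
def EStarThetaOpen (A : Set X) : Prop := EStarThetaClosed Aᶜ

/-- quasi e*-θ-closed. -/
def QEStarThetaClosed (A : Set X) : Prop :=
  ∀ U : Set X, EStarThetaOpen U → A ⊆ U → eStarClTheta A ⊆ U

/-- e*-θ-kernel. -/
def eStarKerTheta (A : Set X) : Set X := ⋂₀ {U | EStarThetaOpen U ∧ A ⊆ U}

/-! Both properties are equivalent to every singleton being e*-θ-closed. Under e*-θ-T_1 the sets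
`{z}ᶜ` are e*-θ-open, and a quasi e*-θ-closed set `A` lies in `{z}ᶜ` for every `z ∉ A`. Conversely,
`{z}ᶜ` is quasi e*-θ-closed unless it is e*-θ-open (its only other superset is `univ`), so under
e*-θ-T_{1/2} either `{z}` is e*-θ-closed, or it is e*-θ-open and then, being isolated in the
e*-topology, e*-θ-closed as well. -/

lemma deltaCl_mono {A B : Set X} (h : A ⊆ B) : deltaCl A ⊆ deltaCl B :=
  fun _ hx U hU hxU => (hx U hU hxU).mono (inter_subset_inter_right _ h)

lemma EStarOpen.sUnion {S : Set (Set X)} (h : ∀ A ∈ S, EStarOpen A) : EStarOpen (⋃₀ S) := by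
  rintro x ⟨A, hAS, hxA⟩
  exact closure_mono (interior_mono (deltaCl_mono (subset_sUnion_of_mem hAS))) (h A hAS hxA)

lemma EStarClosed.sInter {S : Set (Set X)} (h : ∀ F ∈ S, EStarClosed F) :
    EStarClosed (⋂₀ S) := by
  rw [EStarClosed, compl_sInter]
  exact EStarOpen.sUnion (forall_mem_image.2 h)

lemma eStarClosed_eStarCl (A : Set X) : EStarClosed (eStarCl A) :=
  EStarClosed.sInter fun _ hF => hF.1

lemma subset_eStarCl (A : Set X) : A ⊆ eStarCl A :=
  fun _ hx _ hF => hF.2 hx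

lemma eStarCl_subset {A F : Set X} (hF : EStarClosed F) (hAF : A ⊆ F) : eStarCl A ⊆ F :=
  sInter_subset_of_mem ⟨hF, hAF⟩

lemma eStarCl_eq_self_iff {A : Set X} : eStarCl A = A ↔ EStarClosed A :=
  ⟨fun h => h ▸ eStarClosed_eStarCl A,
    fun h => (eStarCl_subset h subset_rfl).antisymm (subset_eStarCl A)⟩

lemma subset_eStarClTheta (A : Set X) : A ⊆ eStarClTheta A :=
  fun x hx U _ hxU => ⟨x, subset_eStarCl U hxU, hx⟩

lemma eStarClTheta_mono {A B : Set X} (h : A ⊆ B) : eStarClTheta A ⊆ eStarClTheta B :=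
  fun _ hx U hU hxU => (hx U hU hxU).mono (inter_subset_inter_right _ h)

lemma eStarThetaClosed_iff {A : Set X} : EStarThetaClosed A ↔ eStarClTheta A ⊆ A :=
  ⟨fun h => h.symm.subset, fun h => (subset_eStarClTheta A).antisymm h⟩

lemma eStarThetaOpen_compl_iff {A : Set X} : EStarThetaOpen Aᶜ ↔ EStarThetaClosed A := by
  rw [EStarThetaOpen, compl_compl]

lemma EStarThetaClosed.eStarClTheta_subset {A F : Set X} (hF : EStarThetaClosed F)
    (hAF : A ⊆ F) : eStarClTheta A ⊆ F :=
  hF ▸ eStarClTheta_mono hAF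

lemma eStarOpen_and_eStarClosed_singleton_of_eStarThetaOpen {x : X}
    (h : EStarThetaOpen {x}) : EStarOpen ({x} : Set X) ∧ EStarClosed ({x} : Set X) := by
  have hx : x ∉ eStarClTheta ({x}ᶜ : Set X) := by
    rw [← h]
    exact not_not_intro rfl
  simp only [eStarClTheta, mem_ofPred_eq, not_forall, inter_compl_nonempty_iff, not_not] at hx
  obtain ⟨U, hU, hxU, hUx⟩ := hx
  have hU_eq : U = {x} :=
    ((subset_eStarCl U).trans hUx).antisymm (singleton_subset_iff.2 hxU)
  subst hU_eq
  exact ⟨hU, eStarCl_eq_self_iff.1 (hUx.antisymm (subset_eStarCl _))⟩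

lemma eStarThetaClosed_singleton_of_eStarThetaOpen {x : X} (h : EStarThetaOpen {x}) :
    EStarThetaClosed ({x} : Set X) := by
  obtain ⟨hopen, hclosed⟩ := eStarOpen_and_eStarClosed_singleton_of_eStarThetaOpen h
  have hcompl : eStarCl ({x}ᶜ : Set X) = {x}ᶜ :=
    eStarCl_eq_self_iff.2 (by rwa [EStarClosed, compl_compl])
  refine eStarThetaClosed_iff.2 fun y hy => by_contra fun hyx => ?_
  obtain ⟨z, hz, rfl⟩ := hy {x}ᶜ hclosed hyx
  exact (hcompl ▸ hz) rfl

lemma qEStarThetaClosed_compl_singleton {z : X} (h : ¬EStarThetaOpen ({z}ᶜ : Set X)) :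
    QEStarThetaClosed ({z}ᶜ : Set X) := by
  intro U hU hzU
  by_cases hz : z ∈ U
  · exact fun w _ => (em (w = z)).elim (· ▸ hz) (hzU ·)
  · exact absurd ((subset_compl_singleton_iff.2 hz).antisymm hzU ▸ hU) h

lemma eStarThetaClosed_singleton_of_qEStarThetaClosed_imp
    (h : ∀ A : Set X, QEStarThetaClosed A → EStarThetaClosed A) (z : X) :
    EStarThetaClosed ({z} : Set X) := by
  by_cases hz : EStarThetaOpen ({z}ᶜ : Set X)
  · exact eStarThetaOpen_compl_iff.1 hz
  · exact eStarThetaClosed_singleton_of_eStarThetaOpen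
      (h _ (qEStarThetaClosed_compl_singleton hz))

lemma QEStarThetaClosed.eStarThetaClosed {A : Set X} (hA : QEStarThetaClosed A)
    (h : ∀ z : X, EStarThetaClosed ({z} : Set X)) : EStarThetaClosed A := by
  refine eStarThetaClosed_iff.2 fun z hz => by_contra fun hzA => ?_
  exact hA {z}ᶜ (eStarThetaOpen_compl_iff.2 (h z)) (subset_compl_singleton_iff.2 hzA) hz rfl

lemma forall_eStarThetaClosed_singleton_iff :
    (∀ z : X, EStarThetaClosed ({z} : Set X)) ↔
      ∀ x y : X, x ≠ y → ∃ U : Set X, EStarThetaOpen U ∧ x ∈ U ∧ y ∉ U := by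
  refine ⟨fun h x y hxy => ⟨{y}ᶜ, eStarThetaOpen_compl_iff.2 (h y), hxy, fun hy => hy rfl⟩,
    fun h z => eStarThetaClosed_iff.2 fun x hx => by_contra fun hxz => ?_⟩
  obtain ⟨V, hV, hxV, hzV⟩ := h x z hxz
  exact EStarThetaClosed.eStarClTheta_subset hV (singleton_subset_iff.2 hzV) hx hxV

theorem stmt16 :
    (∀ A : Set X, QEStarThetaClosed A → EStarThetaClosed A) ↔
    (∀ x y : X, x ≠ y →
      (∃ U : Set X, EStarThetaOpen U ∧ x ∈ U ∧ y ∉ U) ∧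
      (∃ V : Set X, EStarThetaOpen V ∧ y ∈ V ∧ x ∉ V)) := by
  constructor
  · intro h x y hxy
    have hT1 := forall_eStarThetaClosed_singleton_iff.1
      (eStarThetaClosed_singleton_of_qEStarThetaClosed_imp h)
    exact ⟨hT1 x y hxy, hT1 y x hxy.symm⟩
  · intro h A hA
    exact hA.eStarThetaClosed
      (forall_eStarThetaClosed_singleton_iff.2 fun x y hxy => (h x y hxy).1)
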